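/- Let μ > 0 and let i, j ∈ ℕ with 0 ≤ i < j ≤ μ. Suppose there exists n ∈ ℤ such that n + 1/4 > G_μ(i), G_μ(m) ≥ n − 3/4 for every integer m with i ≤ m ≤ j − 1, and n − 3/4 > G_μ(j) ≥ n − 7/4. Then T(G_μ + 3/4, i, j) ≥ ∫_i^j G_μ(t) dt + (j−i)/(2(2−Θ)) − 1/2, where Θ = Θ(i, j, μ). -/

import Mathlib

/-- The function `g(x) = (1/π)(√(1−x²) − x·arccos x)`. -/
noncomputable def g (x : ℝ) : ℝ := (1 / Real.pi) * (Real.sqrt (1 - x ^ 2) - x * Real.arccos x)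

/-- For `μ > 0`, `G_μ(x) = μ·g(x/μ)`. -/
noncomputable def G (μ x : ℝ) : ℝ := μ * g (x / μ)

/-- `Θ(i,j,μ) = (j−i)/(2μ·arccos(i/μ)·√(1−(i/μ)²))`. -/
noncomputable def Θ (i j μ : ℝ) : ℝ :=
  (j - i) / (2 * μ * Real.arccos (i / μ) * Real.sqrt (1 - (i / μ) ^ 2))

/-- The trapezoidal floor sum `T(f,a,b) = (1/2)⌊f(a)⌋ + Σ_{m=a+1}^{b−1} ⌊f(m)⌋ + (1/2)⌊f(b)⌋`. -/
noncomputable def trapT (f : ℝ → ℝ) (a b : ℤ) : ℝ :=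
  (1 / 2) * (⌊f (a : ℝ)⌋ : ℝ) + (∑ m ∈ Finset.Ioo a b, (⌊f (m : ℝ)⌋ : ℝ))
    + (1 / 2) * (⌊f (b : ℝ)⌋ : ℝ)

/-!
On `[i, j]` the second derivative `G_μ''(x) = 1 / (π μ √(1 - (x/μ)²))` increases, so `G_μ` is
`c`-strongly convex there with `c = G_μ''(i)`. With `d = j - i` and `p = |G_μ'(i)|`, strong
convexity gives the tangent bound `G_μ(j) ≥ G_μ(i) - p d + c d² / 2`, the trapezoid bound
`∫_i^j G_μ ≤ d (G_μ(i) + G_μ(j)) / 2 - c d³ / 12`, and `c d ≤ p` because `G_μ'(j) ≤ 0`.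
The hypotheses pin the floors, `⌊G_μ(m) + 3/4⌋ = n` for `i ≤ m < j` and `n - 1` at `j`, so
`T = d n - 1/2`; as `Θ = c d / (2 p)`, what is left is an elementary inequality between `p d`,
`c d²` and `n - (G_μ(i) + G_μ(j)) / 2`.
-/

open Set

namespace StrongConvexOn

variable {a b m : ℝ} {f : ℝ → ℝ}

lemma convexOn_sub_sq {s : Set ℝ} (hf : StrongConvexOn s m f) :
    ConvexOn ℝ s fun x => f x - m / 2 * x ^ 2 := by
  simpa only [Real.norm_eq_abs, sq_abs] using strongConvexOn_iff_convex.1 hf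

lemma le_chord_sub (hf : StrongConvexOn (Icc a b) m f) {t : ℝ} (ht : t ∈ Icc a b) :
    f t ≤ f a + slope f a b * (t - a) - m / 2 * ((t - a) * (b - t)) := by
  rcases eq_or_lt_of_le ht.1 with rfl | hat
  · simp
  have hab : a < b := hat.trans_le ht.2
  have hsec := hf.convexOn_sub_sq.secant_mono (left_mem_Icc.2 hab.le) ht
    (right_mem_Icc.2 hab.le) hat.ne' hab.ne' ht.2
  rw [div_le_div_iff₀ (sub_pos.2 hat) (sub_pos.2 hab)] at hsec
  have hba : b - a ≠ 0 := (sub_pos.2 hab).ne'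
  refine le_of_mul_le_mul_right ?_ (sub_pos.2 hab)
  calc f t * (b - a)
      ≤ f a * (b - a) + (f b - f a) * (t - a) - m / 2 * ((t - a) * (b - t)) * (b - a) := by
        linear_combination hsec
    _ = _ := by rw [slope_def_field]; field_simp

lemma integral_le (hf : StrongConvexOn (Icc a b) m f) (hab : a ≤ b)
    (hfi : IntervalIntegrable f MeasureTheory.volume a b) :
    ∫ t in a..b, f t ≤ (b - a) * (f a + f b) / 2 - m * (b - a) ^ 3 / 12 := by
  rcases eq_or_lt_of_le hab with rfl | hab
  · simp
  set s := slope f a b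
  have hpoly : ∀ t : ℝ, f a + s * (t - a) - m / 2 * ((t - a) * (b - t)) =
      (f a - s * a + m / 2 * a * b) + (s - m / 2 * (a + b)) * t + m / 2 * t ^ 2 := by
    intro t; ring
  calc ∫ t in a..b, f t
      ≤ ∫ t in a..b, (f a + s * (t - a) - m / 2 * ((t - a) * (b - t))) :=
        intervalIntegral.integral_mono_on hab.le hfi
          (by apply Continuous.intervalIntegrable; fun_prop) fun t ht => hf.le_chord_sub ht
    _ = (b - a) * (2 * f a + s * (b - a)) / 2 - m * (b - a) ^ 3 / 12 := by
        simp_rw [hpoly]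
        rw [intervalIntegral.integral_add, intervalIntegral.integral_add,
          intervalIntegral.integral_const_mul, intervalIntegral.integral_const_mul, integral_id,
          integral_pow, intervalIntegral.integral_const, smul_eq_mul]
        · ring
        all_goals
          first | exact intervalIntegrable_const | (apply Continuous.intervalIntegrable; fun_prop)
    _ = (b - a) * (f a + f b) / 2 - m * (b - a) ^ 3 / 12 := by
        simp only [s, slope_def_field]
        field_simp
        ring

lemma add_deriv_mul_add_le (hf : StrongConvexOn (Icc a b) m f) (hab : a < b) {f' : ℝ}
    (hf' : HasDerivAt f f' a) : f a + f' * (b - a) + m / 2 * (b - a) ^ 2 ≤ f b := by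
  have hh : HasDerivAt (fun x => f x - m / 2 * x ^ 2) (f' - m * a) a :=
    (hf'.sub ((hasDerivAt_pow 2 a).const_mul (m / 2))).congr_deriv (by push_cast; ring)
  have := hf.convexOn_sub_sq.le_slope_of_hasDerivAt (left_mem_Icc.2 hab.le)
    (right_mem_Icc.2 hab.le) hab hh
  rw [slope_def_field, le_div_iff₀ (sub_pos.2 hab)] at this
  nlinarith

end StrongConvexOn

noncomputable def G' (μ x : ℝ) : ℝ := -Real.arccos (x / μ) / Real.pi

noncomputable def G'' (μ x : ℝ) : ℝ := 1 / (Real.pi * μ * Real.sqrt (1 - (x / μ) ^ 2))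

lemma continuous_G (μ : ℝ) : Continuous (G μ) := by
  unfold G g
  fun_prop

lemma continuous_G' (μ : ℝ) : Continuous (G' μ) := by
  unfold G'
  fun_prop

lemma hasDerivAt_g {y : ℝ} (hy₁ : -1 < y) (hy₂ : y < 1) :
    HasDerivAt g (-Real.arccos y / Real.pi) y := by
  have hsqrt : HasDerivAt (fun x => Real.sqrt (1 - x ^ 2))
      (1 / (2 * Real.sqrt (1 - y ^ 2)) * -(2 * y)) y :=
    (Real.hasDerivAt_sqrt (by nlinarith)).comp y
      (((hasDerivAt_pow 2 y).const_sub 1).congr_deriv (by push_cast; ring))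
  have harccos := Real.hasDerivAt_arccos hy₁.ne' hy₂.ne
  refine ((hsqrt.sub ((hasDerivAt_id' y).mul harccos)).const_mul (1 / Real.pi)).congr_deriv ?_
  field_simp
  ring

lemma div_mem_Ioo_of_mem_Ioo {μ x : ℝ} (hμ : 0 < μ) (hx : x ∈ Ioo (-μ) μ) :
    x / μ ∈ Ioo (-1) 1 := by
  constructor
  · rw [lt_div_iff₀ hμ]; linarith [hx.1]
  · rw [div_lt_one hμ]; exact hx.2

lemma hasDerivAt_G {μ x : ℝ} (hμ : 0 < μ) (hx : x ∈ Ioo (-μ) μ) :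
    HasDerivAt (G μ) (G' μ x) x := by
  obtain ⟨hy₁, hy₂⟩ := div_mem_Ioo_of_mem_Ioo hμ hx
  refine (((hasDerivAt_g hy₁ hy₂).comp x ((hasDerivAt_id x).div_const μ)).const_mul
    μ).congr_deriv ?_
  simp only [G']
  field_simp

lemma hasDerivAt_G' {μ x : ℝ} (hμ : 0 < μ) (hx : x ∈ Ioo (-μ) μ) :
    HasDerivAt (G' μ) (G'' μ x) x := by
  obtain ⟨hy₁, hy₂⟩ := div_mem_Ioo_of_mem_Ioo hμ hx
  refine (((Real.hasDerivAt_arccos hy₁.ne' hy₂.ne).comp x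
    ((hasDerivAt_id x).div_const μ)).neg.div_const Real.pi).congr_deriv ?_
  simp only [G'']
  field_simp

lemma G'_nonpos (μ x : ℝ) : G' μ x ≤ 0 :=
  div_nonpos_of_nonpos_of_nonneg (neg_nonpos.2 (Real.arccos_nonneg _)) Real.pi_pos.le

lemma G''_pos {μ x : ℝ} (hμ : 0 < μ) (hx : x ∈ Ioo (-μ) μ) : 0 < G'' μ x := by
  obtain ⟨hy₁, hy₂⟩ := div_mem_Ioo_of_mem_Ioo hμ hx
  have hs : 0 < Real.sqrt (1 - (x / μ) ^ 2) := Real.sqrt_pos.2 (by nlinarith)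
  unfold G''
  have := Real.pi_pos
  positivity

lemma G''_le_G'' {μ x y : ℝ} (hμ : 0 < μ) (hx : 0 ≤ x) (hxy : x ≤ y) (hy : y < μ) :
    G'' μ x ≤ G'' μ y := by
  have hs : 0 < Real.sqrt (1 - (y / μ) ^ 2) := by
    obtain ⟨hy₁, hy₂⟩ := div_mem_Ioo_of_mem_Ioo hμ ⟨by linarith, hy⟩
    exact Real.sqrt_pos.2 (by nlinarith)
  have hsq : Real.sqrt (1 - (y / μ) ^ 2) ≤ Real.sqrt (1 - (x / μ) ^ 2) := by gcongr
  unfold G''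
  gcongr

lemma antitoneOn_G {μ : ℝ} (hμ : 0 < μ) : AntitoneOn (G μ) (Icc 0 μ) := by
  refine antitoneOn_of_deriv_nonpos (convex_Icc 0 μ) (continuous_G μ).continuousOn
    (fun x hx => ?_) (fun x hx => ?_) <;> rw [interior_Icc] at hx
  · exact (hasDerivAt_G hμ ⟨by linarith [hx.1], hx.2⟩).differentiableAt.differentiableWithinAt
  · rw [(hasDerivAt_G hμ ⟨by linarith [hx.1], hx.2⟩).deriv]
    exact G'_nonpos μ x

section Interval

variable {μ a b : ℝ} (hμ : 0 < μ) (ha : 0 ≤ a) (hb : b ≤ μ)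
include hμ ha hb

lemma monotoneOn_G'_sub : MonotoneOn (fun t => G' μ t - G'' μ a * t) (Icc a b) := by
  refine monotoneOn_of_deriv_nonneg (convex_Icc a b)
    ((continuous_G' μ).sub (continuous_const_mul _)).continuousOn (fun x hx => ?_)
    (fun x hx => ?_) <;> rw [interior_Icc] at hx
  all_goals
    have hd : HasDerivAt (fun t => G' μ t - G'' μ a * t) (G'' μ x - G'' μ a) x :=
      ((hasDerivAt_G' hμ ⟨by linarith [hx.1], by linarith [hx.2]⟩).sub
        ((hasDerivAt_id' x).const_mul (G'' μ a))).congr_deriv (by rw [mul_one])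
  · exact hd.differentiableAt.differentiableWithinAt
  · rw [hd.deriv, sub_nonneg]
    exact G''_le_G'' hμ ha hx.1.le (by linarith [hx.2])

lemma G''_mul_sub_le_neg_G' (hab : a < b) : G'' μ a * (b - a) ≤ -G' μ a := by
  have := monotoneOn_G'_sub hμ ha hb (left_mem_Icc.2 hab.le) (right_mem_Icc.2 hab.le) hab.le
  linarith [G'_nonpos μ b]

lemma strongConvexOn_G : StrongConvexOn (Icc a b) (G'' μ a) (G μ) := by
  rw [strongConvexOn_iff_convex]
  simp only [Real.norm_eq_abs, sq_abs]
  have hd : ∀ x ∈ Ioo a b, HasDerivAt (fun t => G μ t - G'' μ a / 2 * t ^ 2)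
      (G' μ x - G'' μ a * x) x := fun x hx =>
    ((hasDerivAt_G hμ ⟨by linarith [hx.1], by linarith [hx.2]⟩).sub
      ((hasDerivAt_pow 2 x).const_mul _)).congr_deriv (by push_cast; ring)
  refine MonotoneOn.convexOn_of_deriv (convex_Icc a b)
    ((continuous_G μ).sub (by fun_prop)).continuousOn (fun x hx => ?_) ?_ <;>
    rw [interior_Icc] at *
  · exact (hd x hx).differentiableAt.differentiableWithinAt
  · intro x hx y hy hxy
    rw [(hd x hx).deriv, (hd y hy).deriv]
    exact monotoneOn_G'_sub hμ ha hb (Ioo_subset_Icc_self hx) (Ioo_subset_Icc_self hy) hxy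

end Interval

lemma Θ_eq {μ a : ℝ} (b : ℝ) (hμ : 0 < μ) (ha : a < μ) :
    (b - a) / (2 * (2 - Θ a b μ)) = (b - a) * -G' μ a / (4 * -G' μ a - G'' μ a * (b - a)) := by
  have harccos : Real.arccos (a / μ) ≠ 0 := (Real.arccos_pos.2 ((div_lt_one hμ).2 ha)).ne'
  unfold Θ G' G''
  field_simp
  ring

lemma trapT_eq_of_floor_eq {f : ℝ → ℝ} {a b n : ℤ} (hab : a < b) (ha : ⌊f a⌋ = n)
    (hm : ∀ m ∈ Finset.Ioo a b, ⌊f m⌋ = n) (hb : ⌊f b⌋ = n - 1) :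
    trapT f a b = ((b : ℝ) - a) * n - 1 / 2 := by
  have hcard : ((b - a - 1).toNat : ℝ) = b - a - 1 := by
    exact_mod_cast Int.toNat_of_nonneg (by omega)
  rw [trapT, ha, hb, Finset.sum_congr rfl fun m hm' => by rw [hm m hm'], Finset.sum_const,
    Int.card_Ioo, nsmul_eq_mul, hcard]
  push_cast
  ring

lemma trapT_G_eq {μ : ℝ} {i j : ℕ} {n : ℤ} (hμ : 0 < μ) (hij : i < j)
    (hj : (j : ℝ) ≤ μ)
    (h1 : G μ i < n + 1 / 4) (h2 : ∀ m : ℕ, i ≤ m → m < j → (n : ℝ) - 3 / 4 ≤ G μ m)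
    (h3 : G μ j < n - 3 / 4) (h4 : (n : ℝ) - 7 / 4 ≤ G μ j) :
    trapT (fun t => G μ t + 3 / 4) i j = ((j : ℝ) - i) * n - 1 / 2 := by
  have hfloor {x : ℝ} {k : ℤ} (hl : (k : ℝ) - 3 / 4 ≤ G μ x) (hu : G μ x < k + 1 / 4) :
      ⌊G μ x + 3 / 4⌋ = k :=
    Int.floor_eq_iff.2 ⟨by linarith, by linarith⟩
  have := trapT_eq_of_floor_eq (f := fun t => G μ t + 3 / 4) (n := n)
    (Int.ofNat_lt.2 hij) ?_ ?_ ?_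
  · simpa using this
  · simpa using hfloor (h2 i le_rfl hij) h1
  · intro m hm
    obtain ⟨him, hmj⟩ := Finset.mem_Ioo.1 hm
    lift m to ℕ using by omega
    have hi : (i : ℝ) ∈ Icc 0 μ := ⟨i.cast_nonneg, (Nat.cast_le.2 hij.le).trans hj⟩
    have hm' : (m : ℝ) ∈ Icc 0 μ :=
      ⟨m.cast_nonneg, (Nat.cast_le.2 (show m ≤ j by omega)).trans hj⟩
    have hGm : G μ m ≤ G μ i := antitoneOn_G hμ hi hm' (by exact_mod_cast him.le)
    simpa using hfloor (h2 m (by omega) (by omega)) (hGm.trans_lt h1)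
  · simpa using hfloor (k := n - 1) (by push_cast; linarith) (by push_cast; linarith)

lemma div_four_mul_sub_le {u v w : ℝ} (hv : 0 < v) (hvu : v ≤ u) (hw₁ : 1 / 4 ≤ w)
    (hw₂ : 3 / 4 - u / 2 + v / 4 ≤ w) : u / (4 * u - v) ≤ w + v / 12 := by
  have hden : 0 < 4 * u - v := by linarith
  rw [div_le_iff₀ hden]
  -- `1 / 4 ≤ w` suffices when `3 + v ≤ 4 u`, the second lower bound on `w` otherwise
  rcases le_or_gt ((3 + v) / 4) u with h | h
  · nlinarith [mul_nonneg hv.le (by linarith : (0:ℝ) ≤ 4 * u - 3 - v),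
      mul_nonneg (by linarith : (0:ℝ) ≤ w - 1 / 4) hden.le]
  · nlinarith [mul_nonneg (by linarith : (0:ℝ) ≤ u - v)
        (by linarith : (0:ℝ) ≤ 3 + v - 4 * u),
      mul_nonneg (by linarith : (0:ℝ) ≤ w - (3 / 4 - u / 2 + v / 4)) hden.le,
      mul_nonneg hv.le (by linarith : (0:ℝ) ≤ 1 - v)]

lemma add_mul_div_le_mul {d c p A B I N : ℝ} (hd : 0 < d) (hc : 0 < c) (hcp : c * d ≤ p)
    (hB : A + -p * d + c / 2 * d ^ 2 ≤ B) (hI : I ≤ d * (A + B) / 2 - c * d ^ 3 / 12)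
    (hAN : A < N + 1 / 4) (hBN : B < N - 3 / 4) :
    I + d * p / (4 * p - c * d) ≤ d * N := by
  have hkey : p * d / (4 * (p * d) - c * d ^ 2) ≤ (N - (A + B) / 2) + c * d ^ 2 / 12 :=
    div_four_mul_sub_le (by positivity) (by nlinarith) (by linarith) (by nlinarith)
  have hden : 4 * (p * d) - c * d ^ 2 = d * (4 * p - c * d) := by ring
  rw [hden, mul_comm p d, mul_div_mul_left _ _ hd.ne'] at hkey
  rw [mul_div_assoc]
  linarith [mul_le_mul_of_nonneg_left hkey hd.le]

/-- Lemma 2.4: for `i,j ∈ ℕ` with `0 ≤ i < j ≤ μ`, if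
`n + 1/4 > G_μ(i)`, `G_μ(m) ≥ n − 3/4` for every integer `i ≤ m ≤ j−1`, and
`n − 3/4 > G_μ(j) ≥ n − 7/4` for some `n ∈ ℤ`, then
`T(G_μ + 3/4, i, j) ≥ ∫_i^j G_μ(t) dt + (j−i)/(2(2−Θ)) − 1/2` with `Θ = Θ(i,j,μ)`. -/
theorem stmt2 (μ : ℝ) (i j : ℕ) (hμ : 0 < μ) (hij : i < j) (hj : (j : ℝ) ≤ μ)
    (n : ℤ)
    (h1 : (n : ℝ) + 1 / 4 > G μ i)
    (h2 : ∀ m : ℕ, i ≤ m → m < j → G μ m ≥ (n : ℝ) - 3 / 4)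
    (h3 : (n : ℝ) - 3 / 4 > G μ j)
    (h4 : G μ j ≥ (n : ℝ) - 7 / 4) :
    trapT (fun t => G μ t + 3 / 4) i j ≥
      (∫ t in (i : ℝ)..(j : ℝ), G μ t) + ((j : ℝ) - (i : ℝ)) / (2 * (2 - Θ i j μ)) - 1 / 2 := by
  have hij' : (i : ℝ) < j := by exact_mod_cast hij
  have hi : (0 : ℝ) ≤ i := i.cast_nonneg
  have hiμ : (i : ℝ) < μ := hij'.trans_le hj
  have hG := strongConvexOn_G hμ hi hj
  have := add_mul_div_le_mul (sub_pos.2 hij') (G''_pos hμ ⟨by linarith, hiμ⟩)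
    (G''_mul_sub_le_neg_G' hμ hi hj hij')
    (by simpa using hG.add_deriv_mul_add_le hij' (hasDerivAt_G hμ ⟨by linarith, hiμ⟩))
    (hG.integral_le hij'.le ((continuous_G μ).intervalIntegrable _ _)) h1 h3
  rw [trapT_G_eq hμ hij hj h1 h2 h3 h4, Θ_eq _ hμ hiμ]
  linarith
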